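/- In the rally-point no-server model for a game to n points: as p → 0, the conditional moment generating function of the total number of rallies D given that A wins converges to m(t) = (∑_{k=0}^{n-1} e^{(n+k)t} C(n+k-1, k)) / (∑_{k=0}^{n-1} C(n+k-1, k)). The limiting conditional expectation equals 2n²/(n+1) and the limiting conditional variance equals 2n²(n-1)/((n+1)²(n+2)). -/

import Mathlib

open scoped BigOperators
open Filter

/-- Rally-point scoring: a trajectory is the list of rally winners (`true` = player A);
every rally scores a point for its winner, and the winner serves the next rally.
The first argument is the current server. -/
def rpWeight (pa pb : ℝ) : Bool → List Bool → ℝ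
  | _, [] => 1
  | srv, w :: rest =>
      (if srv then (if w then pa else 1 - pa) else (if w then 1 - pb else pb)) *
        rpWeight pa pb w rest

/-- Points scored by player A. -/
def rpScoreA (g : List Bool) : ℕ := g.count true

/-- Points scored by player B. -/
def rpScoreB (g : List Bool) : ℕ := g.count false

/-- A scores the last point. -/
def rpLastA (g : List Bool) : Prop := g.getLast? = some true

/-- B scores the last point. -/
def rpLastB (g : List Bool) : Prop := g.getLast? = some false

/-- Number of maximal runs of `false` in a list, the first argument being the previous value. -/
def falseRuns : Bool → List Bool → ℕ
  | _, [] => 0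
  | prev, b :: rest => (if prev && !b then 1 else 0) + falseRuns b rest

/-- Number of A-interruptions: maximal blocks of consecutive points scored by B. -/
def rpInter (g : List Bool) : ℕ := falseRuns true g

/-- Probability of a set of trajectories in the rally-point model, first server A. -/
noncomputable def rpPr (pa pb : ℝ) (E : Set (List Bool)) : ℝ :=
  ∑' g : List Bool, Set.indicator E (rpWeight pa pb true) g

/-- Conditional expectation of `f` given the event `E` in the rally-point model, first server A. -/
noncomputable def rpCondExp (pa pb : ℝ) (E : Set (List Bool)) (f : List Bool → ℝ) : ℝ :=
  (∑' g : List Bool, Set.indicator E (fun g => rpWeight pa pb true g * f g) g) / rpPr pa pb E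

/-- A complete rally-point game to `n` points: play stops as soon as a player reaches `n`. -/
def rpGame (n : ℕ) (g : List Bool) : Prop :=
  (rpScoreA g = n ∧ rpScoreB g < n ∨ rpScoreB g = n ∧ rpScoreA g < n) ∧
    ∀ l : List Bool, l <+: g → l ≠ g → rpScoreA l < n ∧ rpScoreB l < n

/-!
With `pb = 1 - pa` the server is irrelevant: a trajectory with `a` points for A and `b` for B has
probability `p ^ a * (1 - p) ^ b`. A game to `m + 1` won by A with `k` points for B is `l ++ [true]`
with `l` any list of `m` A-points and `k` B-points, so there are `C(m + k, k)` of them. The common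
factor `p ^ (m + 1)` cancels in the conditional expectation, which leaves a ratio of polynomials in
`p` that is continuous at `0`; its value there is the average of `φ (m + 1 + k)` under the weights
`C(m + k, k)`. The moments of these weights follow from the parallel summation
`∑_{k ≤ j} C(r + k, k) = C(r + j + 1, j)` and the absorption `(m + 1 + k) C(m + k, k) =
(m + 1) C(m + 1 + k, k)`.
-/

open Finset

def boolListsOfLength : ℕ → Finset (List Bool)
  | 0 => {[]}
  | m + 1 =>
      (boolListsOfLength m).image (List.cons true) ∪ (boolListsOfLength m).image (List.cons false)

theorem mem_boolListsOfLength {m : ℕ} {l : List Bool} :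
    l ∈ boolListsOfLength m ↔ l.length = m := by
  induction m generalizing l with
  | zero => simp [boolListsOfLength]
  | succ m ih =>
    cases l with
    | nil => simp [boolListsOfLength]
    | cons b l => cases b <;> simp [boolListsOfLength, ih]

theorem card_filter_count_boolListsOfLength (b : Bool) (m j : ℕ) :
    #{l ∈ boolListsOfLength m | l.count b = j} = m.choose j := by
  induction m generalizing j with
  | zero => cases j <;> simp [boolListsOfLength, filter_singleton]
  | succ m ih =>
    have hdisj : Disjoint ((boolListsOfLength m).image (List.cons true))
        ((boolListsOfLength m).image (List.cons false)) := by
      simp [disjoint_left]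
    rw [boolListsOfLength, filter_union, card_union_of_disjoint (disjoint_filter_filter hdisj),
      filter_image, filter_image, card_image_of_injective _ List.cons_injective,
      card_image_of_injective _ List.cons_injective]
    cases j with
    | zero => cases b <;> simp [ih]
    | succ j => cases b <;> simp [ih, Nat.choose_succ_succ, add_comm]

theorem rpWeight_one_sub (p : ℝ) (srv : Bool) (g : List Bool) :
    rpWeight p (1 - p) srv g = p ^ g.count true * (1 - p) ^ g.count false := by
  induction g generalizing srv with
  | nil => simp [rpWeight]
  | cons w g ih => cases srv <;> cases w <;> simp [rpWeight, ih] <;> ring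

theorem rpGame_succ_and_rpScoreA_iff {m : ℕ} {g : List Bool} :
    rpGame (m + 1) g ∧ rpScoreA g = m + 1 ↔
      ∃ l : List Bool, l.count true = m ∧ l.count false ≤ m ∧ g = l ++ [true] := by
  unfold rpGame rpScoreA rpScoreB
  constructor
  · rintro ⟨⟨hend, hprefix⟩, hA⟩
    rcases g.eq_nil_or_concat with rfl | ⟨l, b, rfl⟩
    · simp at hA
    simp only [List.concat_eq_append] at hend hprefix hA ⊢
    have hl := (hprefix l (List.prefix_append _ _) (by simp)).1
    cases b <;> simp +decide only [List.count_append, List.count_singleton, if_true, if_false,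
      add_zero, Nat.add_right_cancel_iff] at hA hend hl
    case false =>
      -- a final rally won by B would leave A's `m + 1` points in the proper prefix `l`
      omega
    case true => exact ⟨l, hA, by omega, rfl⟩
  · rintro ⟨l, hA, hB, rfl⟩
    have hscoreA : (l ++ [true]).count true = m + 1 := by simp [List.count_append, hA]
    have hscoreB : (l ++ [true]).count false ≤ m := by simp [List.count_append, hB]
    refine ⟨⟨.inl ⟨hscoreA, by omega⟩, fun l' hpre hne => ?_⟩, hscoreA⟩
    have hl' : l' <+: l := (List.prefix_concat_iff.1 hpre).resolve_left hne
    exact ⟨(hl'.count_le true).trans_lt (by omega), (hl'.count_le false).trans_lt (by omega)⟩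

/-- The games to `m + 1` points won by A in which B scores `k` points. -/
def rpWinsA (m k : ℕ) : Finset (List Bool) :=
  {l ∈ boolListsOfLength (m + k) | l.count false = k}.image (· ++ [true])

theorem mem_rpWinsA {m k : ℕ} {g : List Bool} :
    g ∈ rpWinsA m k ↔ ∃ l : List Bool, l.count true = m ∧ l.count false = k ∧ g = l ++ [true] := by
  simp only [rpWinsA, mem_image, mem_filter, mem_boolListsOfLength,
    ← List.count_false_add_count_true]
  constructor
  · rintro ⟨l, ⟨hlen, hB⟩, rfl⟩
    exact ⟨l, by omega, hB, rfl⟩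
  · rintro ⟨l, hA, hB, rfl⟩
    exact ⟨l, ⟨by omega, hB⟩, rfl⟩

theorem card_rpWinsA (m k : ℕ) : #(rpWinsA m k) = (m + k).choose k := by
  rw [rpWinsA, card_image_of_injective _ (List.append_left_injective [true]),
    card_filter_count_boolListsOfLength]

theorem count_of_mem_rpWinsA {m k : ℕ} {g : List Bool} (hg : g ∈ rpWinsA m k) :
    g.count true = m + 1 ∧ g.count false = k := by
  obtain ⟨l, hA, hB, rfl⟩ := mem_rpWinsA.1 hg
  simp [List.count_append, hA, hB]

theorem pairwise_disjoint_rpWinsA (m : ℕ) :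
    Pairwise fun j k => Disjoint (rpWinsA m j) (rpWinsA m k) :=
  fun _ _ hne => disjoint_left.2 fun _ hj hk =>
    hne ((count_of_mem_rpWinsA hj).2.symm.trans (count_of_mem_rpWinsA hk).2)

theorem setOf_rpGame_succ_and_rpScoreA_eq (m : ℕ) :
    {g | rpGame (m + 1) g ∧ rpScoreA g = m + 1} = ↑((range (m + 1)).biUnion (rpWinsA m)) := by
  ext g
  simp only [Set.mem_ofPred_eq, rpGame_succ_and_rpScoreA_iff, coe_biUnion, coe_range,
    Set.mem_iUnion, Set.mem_Iio, mem_coe, mem_rpWinsA, exists_prop]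
  constructor
  · rintro ⟨l, hA, hB, rfl⟩
    exact ⟨_, Nat.lt_succ_of_le hB, l, hA, rfl, rfl⟩
  · rintro ⟨k, hk, l, hA, rfl, rfl⟩
    exact ⟨l, hA, Nat.le_of_lt_succ hk, rfl⟩

theorem tsum_indicator_rpWeight_mul_length (m : ℕ) (p : ℝ) (φ : ℕ → ℝ) :
    ∑' g, {g | rpGame (m + 1) g ∧ rpScoreA g = m + 1}.indicator
        (fun g => rpWeight p (1 - p) true g * φ g.length) g =
      p ^ (m + 1) * ∑ k ∈ range (m + 1), ((m + k).choose k : ℝ) * (1 - p) ^ k * φ (m + 1 + k) := by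
  rw [setOf_rpGame_succ_and_rpScoreA_eq, ← sum_eq_tsum_indicator,
    sum_biUnion ((pairwise_disjoint_rpWinsA m).set_pairwise _), mul_sum]
  refine sum_congr rfl fun k _ => ?_
  have hterm : ∀ g ∈ rpWinsA m k,
      rpWeight p (1 - p) true g * φ g.length = p ^ (m + 1) * (1 - p) ^ k * φ (m + 1 + k) := by
    intro g hg
    obtain ⟨hA, hB⟩ := count_of_mem_rpWinsA hg
    rw [rpWeight_one_sub, ← List.count_true_add_count_false, hA, hB]
  rw [sum_congr rfl hterm, sum_const, card_rpWinsA, nsmul_eq_mul]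
  ring

theorem rpCondExp_length_eq (m : ℕ) {p : ℝ} (hp : p ≠ 0) (φ : ℕ → ℝ) :
    rpCondExp p (1 - p) {g | rpGame (m + 1) g ∧ rpScoreA g = m + 1} (fun g => φ g.length) =
      (∑ k ∈ range (m + 1), ((m + k).choose k : ℝ) * (1 - p) ^ k * φ (m + 1 + k)) /
        ∑ k ∈ range (m + 1), ((m + k).choose k : ℝ) * (1 - p) ^ k := by
  have hPr := tsum_indicator_rpWeight_mul_length m p 1
  simp only [Pi.one_apply, mul_one] at hPr
  rw [rpCondExp, rpPr, hPr, tsum_indicator_rpWeight_mul_length,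
    mul_div_mul_left _ _ (pow_ne_zero _ hp)]

theorem tendsto_rpCondExp_length (m : ℕ) (φ : ℕ → ℝ) :
    Tendsto (fun p : ℝ =>
        rpCondExp p (1 - p) {g | rpGame (m + 1) g ∧ rpScoreA g = m + 1} (fun g => φ g.length))
      (nhdsWithin 0 (Set.Ioo 0 1))
      (nhds ((∑ k ∈ range (m + 1), ((m + k).choose k : ℝ) * φ (m + 1 + k)) /
        ∑ k ∈ range (m + 1), ((m + k).choose k : ℝ))) := by
  have hpos : 0 < ∑ k ∈ range (m + 1), ((m + k).choose k : ℝ) :=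
    sum_pos (fun k _ => Nat.cast_pos.2 (Nat.choose_pos (Nat.le_add_left k m)))
      nonempty_range_add_one
  have hcont : ContinuousAt (fun p : ℝ =>
      (∑ k ∈ range (m + 1), ((m + k).choose k : ℝ) * (1 - p) ^ k * φ (m + 1 + k)) /
        ∑ k ∈ range (m + 1), ((m + k).choose k : ℝ) * (1 - p) ^ k) 0 :=
    ContinuousAt.div (by fun_prop) (by fun_prop) (by simpa using hpos.ne')
  have hlim := hcont.tendsto.mono_left (nhdsWithin_le_nhds (s := Set.Ioo 0 1))
  simp only [sub_zero, one_pow, mul_one] at hlim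
  exact hlim.congr' (eventually_nhdsWithin_of_forall fun p hp =>
    (rpCondExp_length_eq m hp.1.ne' φ).symm)

theorem sum_range_choose_parallel (r j : ℕ) :
    ∑ k ∈ range (j + 1), (r + k).choose k = (r + j + 1).choose j := by
  rw [Nat.choose_symm_of_eq_add (by ring : r + j + 1 = j + (r + 1)),
    show r + j + 1 = j + r + 1 by ring, ← Nat.sum_range_add_choose j r]
  exact sum_congr rfl fun k _ => by rw [add_comm r k, Nat.choose_symm_add]

theorem choose_mul_add_succ (m k : ℕ) :
    (m + k).choose k * (m + 1 + k) = (m + 1) * (m + 1 + k).choose k := by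
  have h := Nat.choose_mul_succ_eq (m + k) k
  rw [show m + k + 1 - k = m + 1 by omega, show m + k + 1 = m + 1 + k by ring] at h
  rw [h, mul_comm]

theorem sum_choose_add (m : ℕ) :
    ∑ k ∈ range (m + 1), (m + k).choose k = (2 * m + 1).choose m := by
  rw [sum_range_choose_parallel, two_mul]

theorem sum_choose_add_mul (m : ℕ) :
    ∑ k ∈ range (m + 1), (m + k).choose k * (m + 1 + k) = (m + 1) * (2 * m + 2).choose m := by
  rw [sum_congr rfl fun k _ => choose_mul_add_succ m k, ← mul_sum, sum_range_choose_parallel]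
  ring_nf

theorem sum_choose_add_mul_sq (m : ℕ) :
    ∑ k ∈ range (m + 1), (m + k).choose k * (m + 1 + k) ^ 2 + (m + 1) * (2 * m + 2).choose m =
      (m + 1) * (m + 2) * (2 * m + 3).choose m := by
  have hterm : ∀ k, (m + k).choose k * (m + 1 + k) ^ 2 + (m + 1) * (m + 1 + k).choose k =
      (m + 1) * (m + 2) * (m + 2 + k).choose k := fun k => by
    have h := choose_mul_add_succ (m + 1) k
    rw [show m + 1 + 1 = m + 2 by ring] at h
    calc (m + k).choose k * (m + 1 + k) ^ 2 + (m + 1) * (m + 1 + k).choose k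
        = (m + 1) * ((m + 1 + k).choose k * (m + 2 + k)) := by
          rw [sq, ← mul_assoc, choose_mul_add_succ]; ring
      _ = (m + 1) * (m + 2) * (m + 2 + k).choose k := by rw [h]; ring
  calc ∑ k ∈ range (m + 1), (m + k).choose k * (m + 1 + k) ^ 2 + (m + 1) * (2 * m + 2).choose m
      = ∑ k ∈ range (m + 1), ((m + k).choose k * (m + 1 + k) ^ 2 +
          (m + 1) * (m + 1 + k).choose k) := by
        rw [sum_add_distrib, ← mul_sum, sum_range_choose_parallel]
        ring_nf
    _ = (m + 1) * (m + 2) * (2 * m + 3).choose m := by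
        rw [sum_congr rfl fun k _ => hterm k, ← mul_sum, sum_range_choose_parallel]
        ring_nf

theorem cast_succ_choose_eq_div_mul {n k : ℕ} (hk : k ≤ n) :
    ((n + 1).choose k : ℝ) = (n + 1) / (n + 1 - k) * n.choose k := by
  have h : (n.choose k * (n + 1) : ℝ) = (n + 1).choose k * (n + 1 - k) := by
    have := Nat.choose_mul_succ_eq n k
    rw [← Nat.cast_inj (R := ℝ)] at this
    push_cast [Nat.cast_sub (by omega : k ≤ n + 1)] at this
    exact this
  have hpos : (0 : ℝ) < n + 1 - k := by
    have : (k : ℝ) ≤ n := by exact_mod_cast hk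
    linarith
  rw [div_mul_eq_mul_div, eq_div_iff hpos.ne']
  linear_combination -h

section Moments

variable (m : ℕ)

theorem cast_sum_choose_add :
    ∑ k ∈ range (m + 1), ((m + k).choose k : ℝ) = (2 * m + 1).choose m := by
  exact_mod_cast sum_choose_add m

theorem weighted_mean_choose_add :
    (∑ k ∈ range (m + 1), ((m + k).choose k : ℝ) * ((m + 1 + k : ℕ) : ℝ)) /
        ∑ k ∈ range (m + 1), ((m + k).choose k : ℝ) = 2 * ((m : ℝ) + 1) ^ 2 / (m + 2) := by
  have h1 : ∑ k ∈ range (m + 1), ((m + k).choose k : ℝ) * ((m + 1 + k : ℕ) : ℝ) =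
      (m + 1) * (2 * m + 2).choose m := by
    exact_mod_cast sum_choose_add_mul m
  have e2 : ((2 * m + 1 : ℕ) : ℝ) + 1 - m = m + 2 := by push_cast; ring
  rw [h1, cast_sum_choose_add, cast_succ_choose_eq_div_mul (by omega : m ≤ 2 * m + 1), e2]
  have hc : (0 : ℝ) < (2 * m + 1).choose m := by exact_mod_cast Nat.choose_pos (by omega)
  push_cast
  field_simp
  ring

theorem weighted_variance_choose_add :
    (∑ k ∈ range (m + 1), ((m + k).choose k : ℝ) * ((m + 1 + k : ℕ) : ℝ) ^ 2) /
        ∑ k ∈ range (m + 1), ((m + k).choose k : ℝ) -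
      ((∑ k ∈ range (m + 1), ((m + k).choose k : ℝ) * ((m + 1 + k : ℕ) : ℝ)) /
        ∑ k ∈ range (m + 1), ((m + k).choose k : ℝ)) ^ 2 =
      2 * ((m : ℝ) + 1) ^ 2 * m / ((m + 2) ^ 2 * (m + 3)) := by
  have h2 : ∑ k ∈ range (m + 1), ((m + k).choose k : ℝ) * ((m + 1 + k : ℕ) : ℝ) ^ 2 =
      (m + 1) * (m + 2) * (2 * m + 3).choose m - (m + 1) * (2 * m + 2).choose m := by
    rw [eq_sub_iff_add_eq]
    exact_mod_cast sum_choose_add_mul_sq m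
  have e2 : ((2 * m + 1 : ℕ) : ℝ) + 1 - m = m + 2 := by push_cast; ring
  have e3 : ((2 * m + 2 : ℕ) : ℝ) + 1 - m = m + 3 := by push_cast; ring
  rw [h2, weighted_mean_choose_add, cast_sum_choose_add,
    cast_succ_choose_eq_div_mul (by omega : m ≤ 2 * m + 2), e3,
    cast_succ_choose_eq_div_mul (by omega : m ≤ 2 * m + 1), e2]
  have hc : (0 : ℝ) < (2 * m + 1).choose m := by exact_mod_cast Nat.choose_pos (by omega)
  push_cast
  field_simp
  ring

end Moments

theorem stmt_18 (n : ℕ) (hn : 1 ≤ n) :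
    (∀ t : ℝ,
      Tendsto (fun p : ℝ =>
          rpCondExp p (1 - p) {g : List Bool | rpGame n g ∧ rpScoreA g = n}
            (fun g => Real.exp (t * (g.length : ℝ))))
        (nhdsWithin (0 : ℝ) (Set.Ioo (0 : ℝ) 1))
        (nhds ((∑ k ∈ Finset.range n, Real.exp (((n : ℝ) + k) * t) * ((n + k - 1).choose k : ℝ)) /
          (∑ k ∈ Finset.range n, ((n + k - 1).choose k : ℝ))))) ∧
    Tendsto (fun p : ℝ =>
        rpCondExp p (1 - p) {g : List Bool | rpGame n g ∧ rpScoreA g = n}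
          (fun g => (g.length : ℝ)))
      (nhdsWithin (0 : ℝ) (Set.Ioo (0 : ℝ) 1)) (nhds (2 * (n : ℝ) ^ 2 / ((n : ℝ) + 1))) ∧
    Tendsto (fun p : ℝ =>
        rpCondExp p (1 - p) {g : List Bool | rpGame n g ∧ rpScoreA g = n}
            (fun g => (g.length : ℝ) ^ 2) -
          (rpCondExp p (1 - p) {g : List Bool | rpGame n g ∧ rpScoreA g = n}
            (fun g => (g.length : ℝ))) ^ 2)
      (nhdsWithin (0 : ℝ) (Set.Ioo (0 : ℝ) 1))
      (nhds (2 * (n : ℝ) ^ 2 * ((n : ℝ) - 1) / (((n : ℝ) + 1) ^ 2 * ((n : ℝ) + 2)))) := by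
  obtain ⟨m, rfl⟩ : ∃ m, n = m + 1 := ⟨n - 1, by omega⟩
  refine ⟨fun t => ?_, ?_, ?_⟩
  · convert tendsto_rpCondExp_length m (fun j => Real.exp (t * j)) using 3 <;>
      refine sum_congr rfl fun k _ => ?_
    · rw [show m + 1 + k - 1 = m + k by omega, mul_comm]
      push_cast
      ring_nf
    · rw [show m + 1 + k - 1 = m + k by omega]
  · convert tendsto_rpCondExp_length m (fun j => (j : ℝ)) using 2
    rw [weighted_mean_choose_add]
    push_cast
    ring
  · convert (tendsto_rpCondExp_length m (fun j => (j : ℝ) ^ 2)).sub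
      ((tendsto_rpCondExp_length m (fun j => (j : ℝ))).pow 2) using 2
    rw [weighted_variance_choose_add]
    push_cast
    ring
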